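/- arXiv:1605.02595 — 3 statements merged into one kernel-verified Lean document; each statement's English description precedes it below -/
import Mathlib

section
/- Let m⁺_j > 0 and m⁻_j < 0 for j = 0,...,N with N ≥ 4, satisfying m⁺_j ≤ 2·m⁺_{j+1} and |m⁻_j| ≤ 2·|m⁻_{j+1}| for all j, and m⁺_N/m⁺_0 ≤ C·2^N, |m⁻_N|/|m⁻_0| ≤ C·2^N, with C ≥ 1. Then there exist at least N/2 indices k ∈ {0,...,N-1} such that simultaneously m⁺_{k+1} ≤ 128C·m⁺_k and |m⁻_{k+1}| ≤ 128C·|m⁻_k|. -/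
/-!
Along a positive sequence whose steps shrink by at most a factor `2`, every step that grows
by more than `128C` must be paid for: if `b` steps do, then
`(128C)^b 2^{-(N-b)} ≤ m_N / m_0 ≤ C 2^N`, which forces `b ≤ N/4`. Applying this to `m⁺` and
to `|m⁻|` excludes at most `N/2` indices.
-/

open Finset

section Growth

variable {f : ℕ → ℝ} {a A C : ℝ}

theorem pow_count_mul_le_pow_mul (ha : 0 ≤ a) (hA : 0 ≤ A) :
    ∀ n, (∀ j < n, f j ≤ a * f (j + 1)) →
      A ^ Nat.count (fun k => A * f k < f (k + 1)) n * f 0 ≤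
        a ^ (n - Nat.count (fun k => A * f k < f (k + 1)) n) * f n
  | 0, _ => by simp
  | n + 1, hgrow => by
    have ih := pow_count_mul_le_pow_mul ha hA n fun j hj => hgrow j (by omega)
    have hcount := Nat.count_le (p := fun k => A * f k < f (k + 1)) (n := n)
    rw [Nat.count_succ]
    split_ifs with hbig
    · calc A ^ (Nat.count _ n + 1) * f 0 = A * (A ^ Nat.count _ n * f 0) := by ring
        _ ≤ A * (a ^ (n - Nat.count _ n) * f n) := by gcongr
        _ = a ^ (n - Nat.count _ n) * (A * f n) := by ring
        _ ≤ a ^ (n + 1 - (Nat.count _ n + 1)) * f (n + 1) := by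
          rw [Nat.add_sub_add_right]; gcongr
    · calc A ^ (Nat.count _ n + 0) * f 0 ≤ a ^ (n - Nat.count _ n) * f n := by simpa using ih
        _ ≤ a ^ (n - Nat.count _ n) * (a * f (n + 1)) := by gcongr; exact hgrow n n.lt_succ_self
        _ = a ^ (n + 1 - (Nat.count _ n + 0)) * f (n + 1) := by
          rw [← mul_assoc, ← pow_succ, add_zero, Nat.sub_add_comm hcount]

theorem four_mul_card_filter_not_le (n : ℕ) (hf0 : 0 < f 0)
    (hgrow : ∀ j < n, f j ≤ 2 * f (j + 1)) (hC : 1 ≤ C) (htot : f n / f 0 ≤ C * 2 ^ n) :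
    4 * #{k ∈ range n | ¬ f (k + 1) ≤ 128 * C * f k} ≤ n := by
  simp_rw [not_le, ← Nat.count_eq_card_filter_range]
  set b := Nat.count (fun k => 128 * C * f k < f (k + 1)) n
  have hbn : b ≤ n := Nat.count_le _
  have hpow : (128 * C) ^ b ≤ 2 ^ (n - b) * (C * 2 ^ n) := by
    have key := pow_count_mul_le_pow_mul (A := 128 * C) (by norm_num) (by positivity) n hgrow
    rw [div_le_iff₀ hf0] at htot
    refine le_of_mul_le_mul_right ?_ hf0
    calc (128 * C) ^ b * f 0 ≤ 2 ^ (n - b) * f n := key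
      _ ≤ 2 ^ (n - b) * (C * 2 ^ n * f 0) := by gcongr
      _ = 2 ^ (n - b) * (C * 2 ^ n) * f 0 := by ring
  rcases Nat.eq_zero_or_pos b with hb | hb
  · omega
  have h2pow : (2 : ℝ) ^ (7 * b) ≤ 2 ^ (n - b + n) := by
    refine le_of_mul_le_mul_right ?_ (by positivity : (0 : ℝ) < C)
    calc (2 : ℝ) ^ (7 * b) * C = 128 ^ b * C ^ 1 := by rw [pow_mul, pow_one]; norm_num
      _ ≤ 128 ^ b * C ^ b := by gcongr 128 ^ b * ?_; exact pow_le_pow_right₀ hC hb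
      _ = (128 * C) ^ b := (mul_pow _ _ _).symm
      _ ≤ 2 ^ (n - b) * (C * 2 ^ n) := hpow
      _ = 2 ^ (n - b + n) * C := by ring
  have := (pow_le_pow_iff_right₀ (by norm_num : (1 : ℝ) < 2)).mp h2pow
  omega

end Growth

theorem Finset.card_le_card_filter_and_add {α : Type*} (s : Finset α) (p q : α → Prop)
    [DecidablePred p] [DecidablePred q] :
    #s ≤ #{x ∈ s | p x ∧ q x} + (#{x ∈ s | ¬ p x} + #{x ∈ s | ¬ q x}) := by
  classical
  rw [← card_filter_add_card_filter_not (s := s) (fun x => p x ∧ q x)]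
  gcongr
  simp_rw [not_and_or, filter_or]
  exact card_union_le _ _

theorem stmt3_general (N : ℕ) (mp mn : ℕ → ℝ)
    (hmp : ∀ j ≤ N, 0 < mp j) (hmn : ∀ j ≤ N, mn j < 0)
    (hgrowp : ∀ j < N, mp j ≤ 2 * mp (j + 1))
    (hgrown : ∀ j < N, |mn j| ≤ 2 * |mn (j + 1)|)
    (C : ℝ) (hC : 1 ≤ C)
    (htotp : mp N / mp 0 ≤ C * 2 ^ N)
    (htotn : |mn N| / |mn 0| ≤ C * 2 ^ N) :
    (N : ℝ) / 2 ≤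
      (((range N).filter fun k =>
        mp (k + 1) ≤ 128 * C * mp k ∧ |mn (k + 1)| ≤ 128 * C * |mn k|).card : ℝ) := by
  have hp := four_mul_card_filter_not_le N (hmp 0 N.zero_le) hgrowp hC htotp
  have hn := four_mul_card_filter_not_le (f := fun j => |mn j|) N
    (abs_pos_of_neg (hmn 0 N.zero_le)) hgrown hC htotn
  have hsplit := card_le_card_filter_and_add (range N)
    (fun k => mp (k + 1) ≤ 128 * C * mp k) (fun k => |mn (k + 1)| ≤ 128 * C * |mn k|)
  rw [card_range] at hsplit
  have : N ≤ 2 * #{k ∈ range N |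
      mp (k + 1) ≤ 128 * C * mp k ∧ |mn (k + 1)| ≤ 128 * C * |mn k|} := by omega
  rw [div_le_iff₀ two_pos]
  exact_mod_cast (by linarith : N ≤ _ * 2)

/-- Given `m⁺_j > 0`, `m⁻_j < 0` for `j = 0,…,N`, `N ≥ 4`, with
`m⁺_j ≤ 2 m⁺_{j+1}`, `|m⁻_j| ≤ 2 |m⁻_{j+1}|`, and `m⁺_N/m⁺_0 ≤ C·2^N`,
`|m⁻_N|/|m⁻_0| ≤ C·2^N`, `C ≥ 1`, there are at least `N/2` indices
`k ∈ {0,…,N-1}` with simultaneously `m⁺_{k+1} ≤ 128C·m⁺_k` and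
`|m⁻_{k+1}| ≤ 128C·|m⁻_k|`. -/
theorem stmt3 (N : ℕ) (hN : 4 ≤ N) (mp mn : ℕ → ℝ)
    (hmp : ∀ j ≤ N, 0 < mp j) (hmn : ∀ j ≤ N, mn j < 0)
    (hgrowp : ∀ j < N, mp j ≤ 2 * mp (j + 1))
    (hgrown : ∀ j < N, |mn j| ≤ 2 * |mn (j + 1)|)
    (C : ℝ) (hC : 1 ≤ C)
    (htotp : mp N / mp 0 ≤ C * 2 ^ N)
    (htotn : |mn N| / |mn 0| ≤ C * 2 ^ N) :
    (N : ℝ) / 2 ≤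
      (((range N).filter fun k =>
        mp (k + 1) ≤ 128 * C * mp k ∧ |mn (k + 1)| ≤ 128 * C * |mn k|).card : ℝ) :=
  stmt3_general N mp mn hmp hmn hgrowp hgrown C hC htotp htotn
end

section
/- Suppose that to each cube on the j-th step of a Y-adic subdivision we assign a level s ∈ {0,...,j}, such that on step 0 there is one cube at level 0, and each cube at level s subdivides into Y cubes of which at least one has level ≥ s+1 and the rest have level ≥ s. Then for each k, the number of j-th-step cubes with level ≤ k is at most ∑_{s=0}^{k} C(j,s)·(Y-1)^{j-s}. -/
/-!
Split a cube of step `j + 1` into its parent `p` and the child index. Among the children of `p`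
at most `Y - 1` have level `≤ k` when `level p ≤ k`, and all `Y` do only when `level p < k`
(at least one child improves, and none gets worse). Writing `N j k` for the number of
step-`j` cubes of level `≤ k`, this gives `N (j + 1) k ≤ (Y - 1) N j k + N j (k - 1)`, and
Pascal's rule shows that `∑_{s ≤ k} C(j, s) (Y - 1)^(j - s)` satisfies this recurrence with
equality.
-/

open Finset

def levelCountBound (W j k : ℕ) : ℕ := ∑ s ∈ range (k + 1), j.choose s * W ^ (j - s)

namespace levelCountBound

theorem zero_left (W k : ℕ) : levelCountBound W 0 k = 1 := by
  simp [levelCountBound, sum_range_succ', Nat.choose_eq_zero_of_lt]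

theorem succ_zero (W j : ℕ) : levelCountBound W (j + 1) 0 = W * levelCountBound W j 0 := by
  simp [levelCountBound, pow_succ, mul_comm]

private theorem choose_succ_succ_mul_pow (W j s : ℕ) :
    (j + 1).choose (s + 1) * W ^ (j - s)
      = j.choose s * W ^ (j - s) + W * (j.choose (s + 1) * W ^ (j - (s + 1))) := by
  rw [Nat.choose_succ_succ', add_mul]
  congr 1
  rcases lt_or_ge s j with h | h
  · rw [show j - s = j - (s + 1) + 1 by omega, pow_succ]; ring
  · simp [Nat.choose_eq_zero_of_lt (show j < s + 1 by omega)]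

theorem succ_succ (W j k : ℕ) :
    levelCountBound W (j + 1) (k + 1)
      = W * levelCountBound W j (k + 1) + levelCountBound W j k := by
  simp only [levelCountBound]
  rw [sum_range_succ', sum_range_succ' _ (k + 1)]
  simp only [Nat.add_sub_add_right, choose_succ_succ_mul_pow, sum_add_distrib, ← mul_sum,
    Nat.choose_zero_right, Nat.sub_zero, one_mul, pow_succ]
  ring

end levelCountBound

theorem card_filter_fin_succ_fun {α : Type*} [Fintype α] {n : ℕ}
    (P : (Fin (n + 1) → α) → Prop) [DecidablePred P] :
    #{c | P c} = ∑ p : Fin n → α, #{y | P (Fin.snoc p y)} := by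
  simp only [card_filter]
  rw [← Fintype.sum_equiv (Fin.snocEquiv fun _ => α) _ _ fun _ => rfl,
    Fintype.sum_prod_type_right]
  rfl

theorem card_filter_le_of_exists_succ_le {α : Type*} [Fintype α] {f : α → ℕ} {m : ℕ}
    (hmono : ∀ y, m ≤ f y) (himprove : ∃ y, m + 1 ≤ f y) (k : ℕ) :
    #{y | f y ≤ k}
      ≤ (Fintype.card α - 1) * (if m ≤ k then 1 else 0) + if m < k then 1 else 0 := by
  obtain ⟨y₀, hy₀⟩ := himprove
  have hcard : 0 < Fintype.card α := Fintype.card_pos_iff.mpr ⟨y₀⟩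
  by_cases hlt : m < k
  · have := card_le_univ (univ.filter fun y => f y ≤ k)
    simp only [hlt.le, hlt, if_true]
    omega
  by_cases hle : m ≤ k
  · have hy₀_notMem : y₀ ∉ ({y | f y ≤ k} : Finset α) := by
      simp only [mem_filter, mem_univ, true_and, not_le]; omega
    have := card_lt_univ_of_notMem hy₀_notMem
    simp only [hle, hlt, if_true, if_false]
    omega
  · have hempty : ({y | f y ≤ k} : Finset α) = ∅ :=
      filter_eq_empty_iff.mpr fun y _ => by have := hmono y; omega
    simp [hempty]

section LevelCount

variable {α : Type*} [Fintype α] {level : (j : ℕ) → (Fin j → α) → ℕ}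

theorem card_level_succ_le
    (himprove : ∀ (j : ℕ) (c : Fin j → α),
      ∃ y, level j c + 1 ≤ level (j + 1) (Fin.snoc c y))
    (hmono : ∀ (j : ℕ) (c : Fin j → α) (y : α), level j c ≤ level (j + 1) (Fin.snoc c y))
    (j k : ℕ) :
    #{c | level (j + 1) c ≤ k}
      ≤ (Fintype.card α - 1) * #{c | level j c ≤ k} + #{c | level j c < k} := by
  rw [card_filter_fin_succ_fun, card_filter, card_filter, mul_sum, ← sum_add_distrib]
  exact sum_le_sum fun c _ => card_filter_le_of_exists_succ_le (hmono j c) (himprove j c) k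

theorem card_level_le_levelCountBound
    (himprove : ∀ (j : ℕ) (c : Fin j → α),
      ∃ y, level j c + 1 ≤ level (j + 1) (Fin.snoc c y))
    (hmono : ∀ (j : ℕ) (c : Fin j → α) (y : α), level j c ≤ level (j + 1) (Fin.snoc c y))
    (j k : ℕ) :
    #{c | level j c ≤ k} ≤ levelCountBound (Fintype.card α - 1) j k := by
  induction j generalizing k with
  | zero =>
    rw [levelCountBound.zero_left]
    exact (card_le_univ _).trans_eq (by simp)
  | succ j ih =>
    refine (card_level_succ_le himprove hmono j k).trans ?_
    cases k with
    | zero => simpa [levelCountBound.succ_zero] using Nat.mul_le_mul_left _ (ih 0)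
    | succ k =>
      simp only [Nat.lt_succ_iff, levelCountBound.succ_succ]
      exact Nat.add_le_add (Nat.mul_le_mul_left _ (ih (k + 1))) (ih k)

end LevelCount

theorem stmt5_general (Y : ℕ)
    (level : (j : ℕ) → (Fin j → Fin Y) → ℕ)
    (himprove : ∀ (j : ℕ) (c : Fin j → Fin Y),
      ∃ y : Fin Y, level j c + 1 ≤ level (j + 1) (Fin.snoc c y))
    (hmono : ∀ (j : ℕ) (c : Fin j → Fin Y) (y : Fin Y),
      level j c ≤ level (j + 1) (Fin.snoc c y))
    (j k : ℕ) :
    ((univ.filter fun c : Fin j → Fin Y => level j c ≤ k).card : ℝ)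
      ≤ ∑ s ∈ range (k + 1), (j.choose s : ℝ) * ((Y : ℝ) - 1) ^ (j - s) := by
  -- `Y ≥ 1` makes the truncated `Y - 1` in `ℕ` agree with `(Y : ℝ) - 1`.
  obtain ⟨y, -⟩ := himprove 0 Fin.elim0
  have hY : 1 ≤ Y := y.pos
  have h := card_level_le_levelCountBound himprove hmono j k
  rw [Fintype.card_fin] at h
  exact_mod_cast h

/-- induction counting step. Cubes on step `j` of a `Y`-adic
subdivision are modelled as sequences `Fin j → Fin Y` of child choices. If levels are
assigned so that the root has level `0`, each cube at level `s` has at least one child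
of level `≥ s+1` and all its children have level `≥ s`, then for each `k` the number of
`j`-th step cubes of level `≤ k` is at most `∑_{s=0}^{k} C(j,s)·(Y-1)^{j-s}`. -/
theorem stmt5 (Y : ℕ) (hY : 2 ≤ Y)
    (level : (j : ℕ) → (Fin j → Fin Y) → ℕ)
    (hroot : ∀ c : Fin 0 → Fin Y, level 0 c = 0)
    (himprove : ∀ (j : ℕ) (c : Fin j → Fin Y),
      ∃ y : Fin Y, level j c + 1 ≤ level (j + 1) (Fin.snoc c y))
    (hmono : ∀ (j : ℕ) (c : Fin j → Fin Y) (y : Fin Y),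
      level j c ≤ level (j + 1) (Fin.snoc c y))
    (j k : ℕ) :
    ((univ.filter fun c : Fin j → Fin Y => level j c ≤ k).card : ℝ)
      ≤ ∑ s ∈ range (k + 1), (j.choose s : ℝ) * ((Y : ℝ) - 1) ^ (j - s) :=
  stmt5_general Y level himprove hmono j k
end

section
/- Abstract subdivision lemma: Let Y ≥ 2 be an integer and let F be a function assigning to each cube in a Y-adic subdivision tree a nonnegative real, with root value ≤ N₀, such that whenever a cube c is subdivided into Y children, at least one child c' has F(c') ≤ F(c)/2 and all children c'' have F(c'') ≤ F(c). Then there exists δ > 0 and j₀ (both depending only on Y) such that for all j ≥ j₀, at least half of the Y^j cubes at depth j satisfy F ≤ N₀/(Y^j)^δ. -/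
/-!
At every node the `Y` children carry total mass at most `(Y - 1/2) F(c)`: one of them has at
most half of `F(c)`, the others at most `F(c)`. Hence `∑ F ≤ (Y - 1/2)^j N₀` over the `B = Y^j`
nodes of depth `j`, and by Markov's inequality at most `(Y - 1/2)^j B^δ = B (q Y^δ)^j` of them,
with `q = 1 - 1/(2Y)`, exceed `N₀ B^{-δ}`. Taking `δ > 0` so small that `q Y^δ < 1`, this is at
most `B / 2` once `j` is large.
-/

open Finset

theorem sum_le_card_sub_one_add_mul {ι : Type*} [Fintype ι] {φ : ι → ℝ} {a θ : ℝ}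
    (hle : ∀ y, φ y ≤ a) {y₀ : ι} (hy₀ : φ y₀ ≤ θ * a) :
    ∑ y, φ y ≤ (Fintype.card ι - 1 + θ) * a := by
  classical
  have hrest : ∑ y ∈ univ.erase y₀, φ y ≤ (Fintype.card ι - 1) * a := by
    have hcard : ((univ.erase y₀).card : ℝ) = Fintype.card ι - 1 := by
      rw [card_erase_of_mem (mem_univ y₀), card_univ,
        Nat.cast_sub (Fintype.card_pos_iff.2 ⟨y₀⟩), Nat.cast_one]
    have := sum_le_card_nsmul (univ.erase y₀) φ a fun y _ => hle y
    rwa [nsmul_eq_mul, hcard] at this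
  rw [← add_sum_erase univ φ (mem_univ y₀)]
  linarith

theorem sum_depth_le_pow_mul {α : Type*} [Fintype α] (F : (j : ℕ) → (Fin j → α) → ℝ) {K : ℝ}
    (hK : 0 ≤ K) (hstep : ∀ j c, ∑ y, F (j + 1) (Fin.snoc c y) ≤ K * F j c) (j : ℕ) :
    ∑ c, F j c ≤ K ^ j * ∑ c, F 0 c := by
  induction j with
  | zero => simp
  | succ j ih =>
    calc ∑ c, F (j + 1) c = ∑ c : Fin j → α, ∑ y, F (j + 1) (Fin.snoc c y) := by
          rw [← (Fin.snocEquiv fun _ => α).sum_comp, Fintype.sum_prod_type_right]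
          rfl
      _ ≤ ∑ c, K * F j c := sum_le_sum fun c _ => hstep j c
      _ ≤ K ^ (j + 1) * ∑ c, F 0 c := by
          rw [← mul_sum, pow_succ', mul_assoc]
          exact mul_le_mul_of_nonneg_left ih hK

theorem sum_depth_le_of_exists_le_half {α : Type*} [Fintype α] [Nonempty α]
    (F : (j : ℕ) → (Fin j → α) → ℝ) {N₀ : ℝ} (hroot : ∀ c, F 0 c ≤ N₀)
    (hhalf : ∀ j c, ∃ y, F (j + 1) (Fin.snoc c y) ≤ F j c / 2)
    (hmono : ∀ j c y, F (j + 1) (Fin.snoc c y) ≤ F j c) (j : ℕ) :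
    ∑ c, F j c ≤ (Fintype.card α - 1 + 1 / 2) ^ j * N₀ := by
  have hK : (0 : ℝ) ≤ Fintype.card α - 1 + 1 / 2 := by
    have : (1 : ℝ) ≤ Fintype.card α := by exact_mod_cast Fintype.card_pos
    linarith
  refine (sum_depth_le_pow_mul F hK (fun j c => ?_) j).trans ?_
  · obtain ⟨y₀, hy₀⟩ := hhalf j c
    exact sum_le_card_sub_one_add_mul (hmono j c) (hy₀.trans_eq (by ring))
  · gcongr
    simpa using hroot _

theorem card_filter_div_lt_le_mul {α : Type*} {s : Finset α} {f : α → ℝ}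
    (hf : ∀ x ∈ s, 0 ≤ f x) {M t r : ℝ} (ht : 0 ≤ t) (hr : 0 < r) (hM : 0 ≤ M)
    (hsum : ∑ x ∈ s, f x ≤ M * t) :
    (#(s.filter fun x => t / r < f x) : ℝ) ≤ M * r := by
  rcases ht.eq_or_lt with rfl | ht
  · have hzero : ∀ x ∈ s, f x = 0 :=
      (sum_eq_zero_iff_of_nonneg hf).1 (le_antisymm (by simpa using hsum) (sum_nonneg hf))
    rw [filter_false_of_mem fun x hx => by simp [hzero x hx]]
    simpa using mul_nonneg hM hr.le
  · have markov : #(s.filter fun x => t / r < f x) • (t / r) ≤ ∑ x ∈ s, f x :=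
      (card_nsmul_le_sum _ _ _ fun x hx => (mem_filter.1 hx).2.le).trans
        (sum_le_sum_of_subset_of_nonneg (filter_subset _ _) fun x hx _ => hf x hx)
    rw [nsmul_eq_mul] at markov
    have := markov.trans hsum
    rw [← mul_div_assoc, div_le_iff₀ hr, mul_comm M, mul_assoc] at this
    exact le_of_mul_le_mul_left (by linarith) ht

theorem card_sub_mul_le_card_filter_le_div {α : Type*} [Fintype α] {f : α → ℝ}
    (hf : ∀ x, 0 ≤ f x) {M t r : ℝ} (ht : 0 ≤ t) (hr : 0 < r) (hM : 0 ≤ M)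
    (hsum : ∑ x, f x ≤ M * t) :
    (Fintype.card α : ℝ) - M * r ≤ #(univ.filter fun x => f x ≤ t / r) := by
  have hbad := card_filter_div_lt_le_mul (fun x _ => hf x) ht hr hM hsum
  have hsplit : (#(univ.filter fun x => f x ≤ t / r) : ℝ) + #(univ.filter fun x => t / r < f x)
      = Fintype.card α := by
    have := card_filter_add_card_filter_not (s := univ) fun x => f x ≤ t / r
    simp only [not_le, card_univ] at this
    exact_mod_cast this
  linarith

theorem exists_pos_mul_rpow_lt_one {q b : ℝ} (hq : q < 1) (hb : 0 < b) :
    ∃ δ : ℝ, 0 < δ ∧ q * b ^ δ < 1 := by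
  have hcont : Filter.Tendsto (fun δ : ℝ => q * b ^ δ) (nhds 0) (nhds q) := by
    simpa using ((continuous_const.rpow continuous_id fun _ => Or.inl hb.ne').tendsto 0).const_mul q
  obtain ⟨δ, hlt, hpos⟩ := ((hcont.eventually (gt_mem_nhds hq)).filter_mono
    nhdsWithin_le_nhds |>.and self_mem_nhdsWithin).exists (f := nhdsWithin 0 (Set.Ioi 0))
  exact ⟨δ, hpos, hlt⟩

theorem exists_pos_pow_mul_rpow_le_half {K b : ℝ} (hK : 0 ≤ K) (hKb : K < b) :
    ∃ δ : ℝ, 0 < δ ∧ ∃ j₀ : ℕ, ∀ j ≥ j₀, K ^ j * (b ^ j) ^ δ ≤ b ^ j / 2 := by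
  have hb : 0 < b := hK.trans_lt hKb
  obtain ⟨δ, hδ, hρ⟩ := exists_pos_mul_rpow_lt_one ((div_lt_one hb).2 hKb) hb
  obtain ⟨j₀, hj₀⟩ := exists_pow_lt_of_lt_one (by norm_num : (0 : ℝ) < 1 / 2) hρ
  refine ⟨δ, hδ, j₀, fun j hj => ?_⟩
  calc K ^ j * (b ^ j) ^ δ = b ^ j * (K / b * b ^ δ) ^ j := by
        rw [← Real.rpow_natCast_mul hb.le, mul_comm (j : ℝ), Real.rpow_mul_natCast hb.le,
          ← mul_pow, ← mul_pow]
        field_simp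
    _ ≤ b ^ j * (1 / 2) := by
        gcongr
        exact (pow_le_pow_of_le_one (by positivity) hρ.le hj).trans hj₀.le
    _ = b ^ j / 2 := by ring

/-- abstract subdivision lemma. Let `Y ≥ 2` and let `F` assign a
nonnegative real to each node of the `Y`-ary subdivision tree (nodes at depth `j` are
modelled as sequences `Fin j → Fin Y`), with root value `≤ N₀`, such that whenever a
node is subdivided, at least one child `c'` satisfies `F(c') ≤ F(c)/2` and all children
`c''` satisfy `F(c'') ≤ F(c)`. Then there exist `δ > 0` and `j₀` (depending only on
`Y`) such that for all `j ≥ j₀`, at least half of the `Y^j` nodes at depth `j` satisfy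
`F ≤ N₀/(Y^j)^δ`. -/
theorem stmt17 (Y : ℕ) (hY : 2 ≤ Y) :
    ∃ δ : ℝ, 0 < δ ∧ ∃ j₀ : ℕ,
      ∀ (F : (j : ℕ) → (Fin j → Fin Y) → ℝ) (N₀ : ℝ),
        (∀ j c, 0 ≤ F j c) →
        (∀ c : Fin 0 → Fin Y, F 0 c ≤ N₀) →
        (∀ (j : ℕ) (c : Fin j → Fin Y),
          ∃ y : Fin Y, F (j + 1) (Fin.snoc c y) ≤ F j c / 2) →
        (∀ (j : ℕ) (c : Fin j → Fin Y) (y : Fin Y),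
          F (j + 1) (Fin.snoc c y) ≤ F j c) →
        ∀ j : ℕ, j₀ ≤ j →
          ((Y : ℝ) ^ j) / 2 ≤
            ((Finset.univ.filter fun c : Fin j → Fin Y =>
              F j c ≤ N₀ / ((Y : ℝ) ^ j) ^ δ).card : ℝ) := by
  have : NeZero Y := ⟨by omega⟩
  have hK : (0 : ℝ) ≤ Y - 1 + 1 / 2 := by
    have : (2 : ℝ) ≤ Y := by exact_mod_cast hY
    linarith
  obtain ⟨δ, hδ, j₀, hsmall⟩ :=
    exists_pos_pow_mul_rpow_le_half hK (by linarith : (Y : ℝ) - 1 + 1 / 2 < Y)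
  refine ⟨δ, hδ, j₀, fun F N₀ hF hroot hhalf hmono j hj => ?_⟩
  have hN₀ : 0 ≤ N₀ := (hF 0 _).trans (hroot Fin.elim0)
  have hsum := sum_depth_le_of_exists_le_half F hroot hhalf hmono j
  rw [Fintype.card_fin] at hsum
  have hgood := card_sub_mul_le_card_filter_le_div (hF j) hN₀
    (by positivity : (0 : ℝ) < ((Y : ℝ) ^ j) ^ δ) (pow_nonneg hK j) hsum
  rw [Fintype.card_fun, Fintype.card_fin, Fintype.card_fin, Nat.cast_pow] at hgood
  linarith [hsmall j hj]
end
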